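/- Let {q_k} be a sequence of generalized quadratic forms on ℝⁿ epi-converging to q, and suppose there is r ≥ 0 with q_k(w) ≥ −r‖w‖² for all w ∈ ℝⁿ and all sufficiently large k. Then q is a generalized quadratic form and q(w) ≥ −r‖w‖² for all w ∈ ℝⁿ. -/

import Mathlib

open Filter Topology
open scoped RealInnerProductSpace

variable {n : ℕ}

/-- A generalized quadratic form on `ℝⁿ`: `q = (1/2)⟪·, A·⟫ + δ_L` with `A` symmetric and
`L` a linear subspace. -/
def IsGenQuadForm (q : EuclideanSpace ℝ (Fin n) → EReal) : Prop :=
  ∃ (A : EuclideanSpace ℝ (Fin n) →L[ℝ] EuclideanSpace ℝ (Fin n))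
    (L : Submodule ℝ (EuclideanSpace ℝ (Fin n))),
    (∀ x y, ⟪A x, y⟫ = ⟪x, A y⟫) ∧
    (∀ w ∈ L, q w = ((1 / 2 * ⟪w, A w⟫ : ℝ) : EReal)) ∧
    (∀ w ∉ L, q w = ⊤)

/-- Epi-convergence of a sequence of extended-real-valued functions. -/
def EpiConverges (q : ℕ → EuclideanSpace ℝ (Fin n) → EReal)
    (ql : EuclideanSpace ℝ (Fin n) → EReal) : Prop :=
  (∀ (x : EuclideanSpace ℝ (Fin n)) (xs : ℕ → EuclideanSpace ℝ (Fin n)),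
      Tendsto xs atTop (𝓝 x) → ql x ≤ Filter.liminf (fun k => q k (xs k)) atTop) ∧
  (∀ x : EuclideanSpace ℝ (Fin n), ∃ xs : ℕ → EuclideanSpace ℝ (Fin n),
      Tendsto xs atTop (𝓝 x) ∧ Filter.limsup (fun k => q k (xs k)) atTop ≤ ql x)

/-!
Generalized quadratic forms are characterized, among functions `q : ℝⁿ → EReal` bounded below
by `-r‖·‖²`, by `q 0 = 0`, `q (c • w) = c² q w` for `c ≠ 0` and the parallelogram inequality
`q (w + z) + q (w - z) ≤ 2 q w + 2 q z`. Indeed, the inequality makes the effective domain `L` a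
subspace, and applied to `w + z, w - z` it yields the parallelogram law on `L`. The
Jordan–von Neumann polarization `(Q (x + y) - Q (x - y)) / 4` is then biadditive; being bounded
along lines it is bilinear (without a bound, `ℚ`-linear pathologies satisfy the same identities),
and Riesz representation turns it into the symmetric operator.

All three properties hold for each `q k` (the last with equality) and pass to the epi-limit
along recovery sequences, as does the lower bound.
-/

open Metric Set

theorem EReal.two_mul_ne_bot {x : EReal} (hx : x ≠ ⊥) : 2 * x ≠ ⊥ :=
  (EReal.mul_ne_bot 2 x).mpr
    ⟨.inl (EReal.coe_ne_bot 2), .inr hx, .inl (EReal.coe_ne_top 2), .inl zero_le_two⟩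

theorem EReal.two_mul_ne_top {x : EReal} (hx : x ≠ ⊤) : 2 * x ≠ ⊤ :=
  (EReal.mul_ne_top 2 x).mpr
    ⟨.inl (EReal.coe_ne_bot 2), .inl zero_le_two, .inl (EReal.coe_ne_top 2), .inr hx⟩

theorem EReal.add_eq_top_of_ne_bot {a b : EReal} (ha : a ≠ ⊥) (hb : b ≠ ⊥) (h : a = ⊤ ∨ b = ⊤) :
    a + b = ⊤ := by
  rcases h with rfl | rfl
  · exact EReal.top_add_of_ne_bot hb
  · exact EReal.add_top_of_ne_bot ha

section Polarization

variable {F : Type*} [AddCommGroup F] {Q : F → ℝ}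

noncomputable def polarForm (Q : F → ℝ) (x y : F) : ℝ := (Q (x + y) - Q (x - y)) / 4

theorem apply_zero_of_parallelogram
    (hpar : ∀ x y, Q (x + y) + Q (x - y) = 2 * Q x + 2 * Q y) : Q 0 = 0 := by
  have := hpar 0 0
  simp only [add_zero, sub_zero] at this
  linarith

theorem apply_neg_of_parallelogram
    (hpar : ∀ x y, Q (x + y) + Q (x - y) = 2 * Q x + 2 * Q y) (x : F) : Q (-x) = Q x := by
  have := hpar 0 x
  rw [zero_add, zero_sub, apply_zero_of_parallelogram hpar] at this
  linarith

theorem polarForm_comm (hpar : ∀ x y, Q (x + y) + Q (x - y) = 2 * Q x + 2 * Q y) (x y : F) :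
    polarForm Q x y = polarForm Q y x := by
  rw [polarForm, polarForm, add_comm, ← neg_sub x y, apply_neg_of_parallelogram hpar]

theorem polarForm_self (hpar : ∀ x y, Q (x + y) + Q (x - y) = 2 * Q x + 2 * Q y) (x : F) :
    polarForm Q x x = Q x := by
  have := hpar x x
  rw [sub_self, apply_zero_of_parallelogram hpar] at this
  rw [polarForm, sub_self, apply_zero_of_parallelogram hpar]
  linarith

theorem polarForm_neg_left (hpar : ∀ x y, Q (x + y) + Q (x - y) = 2 * Q x + 2 * Q y)
    (x y : F) : polarForm Q (-x) y = -polarForm Q x y := by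
  rw [polarForm, polarForm, ← apply_neg_of_parallelogram hpar (x + y),
    ← apply_neg_of_parallelogram hpar (x - y), neg_add', neg_sub', sub_neg_eq_add]
  ring

theorem polarForm_add_add_polarForm_sub
    (hpar : ∀ x y, Q (x + y) + Q (x - y) = 2 * Q x + 2 * Q y) (x y z : F) :
    polarForm Q (x + y) z + polarForm Q (x - y) z = 2 * polarForm Q x z := by
  have h₁ := hpar (x + z) y
  have h₂ := hpar (x - z) y
  rw [show x + z + y = x + y + z by abel, show x + z - y = x - y + z by abel] at h₁
  rw [show x - z + y = x + y - z by abel, show x - z - y = x - y - z by abel] at h₂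
  simp only [polarForm]
  linarith

theorem polarForm_add_left (hpar : ∀ x y, Q (x + y) + Q (x - y) = 2 * Q x + 2 * Q y)
    (x y z : F) : polarForm Q (x + y) z = polarForm Q x z + polarForm Q y z := by
  have h₁ := polarForm_add_add_polarForm_sub hpar x y z
  have h₂ := polarForm_add_add_polarForm_sub hpar y x z
  rw [add_comm y x, ← neg_sub, polarForm_neg_left hpar] at h₂
  linarith

end Polarization

theorem polarForm_smul_left {F : Type*} [NormedAddCommGroup F] [NormedSpace ℝ F] {Q : F → ℝ}
    (hpar : ∀ x y, Q (x + y) + Q (x - y) = 2 * Q x + 2 * Q y)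
    (hsmul : ∀ (c : ℝ) x, Q (c • x) = c ^ 2 * Q x)
    (hbdd : ∀ R, BddBelow (Q '' closedBall 0 R)) (c : ℝ) (x y : F) :
    polarForm Q (c • x) y = c * polarForm Q x y := by
  -- `s ↦ polarForm Q (s • x) y` is additive and bounded near `0`, hence continuous, hence linear.
  obtain ⟨M, hM⟩ := hbdd (‖x‖ + ‖y‖)
  have hQ : ∀ s ∈ Icc (-1 : ℝ) 1, ∀ w : F, ‖w‖ = ‖y‖ → Q w = Q y →
      M ≤ Q (s • x + w) ∧ Q (s • x + w) ≤ 2 * |Q x| + 2 * Q y - M := by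
    intro s hs w hw hQw
    have hball : ∀ v, ‖v‖ = ‖y‖ → s • x + v ∈ closedBall (0 : F) (‖x‖ + ‖y‖) := by
      intro v hv
      rw [mem_closedBall_zero_iff, ← hv]
      refine (norm_add_le _ _).trans (add_le_add_left ?_ _)
      rw [norm_smul]
      exact mul_le_of_le_one_left (norm_nonneg x) (abs_le.mpr hs)
    have hlow : ∀ v, ‖v‖ = ‖y‖ → M ≤ Q (s • x + v) := fun v hv => hM ⟨_, hball v hv, rfl⟩
    have hsx : Q (s • x) ≤ |Q x| := by
      rw [hsmul]
      have : s ^ 2 ≤ 1 := by nlinarith [hs.1, hs.2]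
      nlinarith [le_abs_self (Q x), abs_nonneg (Q x), sq_nonneg s]
    have hsum := hpar (s • x) w
    have hdiff := hlow (-w) (by rw [norm_neg, hw])
    rw [← sub_eq_add_neg] at hdiff
    exact ⟨hlow w hw, by linarith⟩
  let f : ℝ →+ ℝ := AddMonoidHom.mk' (fun s => polarForm Q (s • x) y)
    fun s t => by simp only [add_smul, polarForm_add_left hpar]
  have hf : Continuous f := by
    refine f.continuous_of_isBounded_nhds_zero (Icc_mem_nhds (by norm_num : (-1 : ℝ) < 0) one_pos)
      ((isBounded_Icc ((M - (2 * |Q x| + 2 * Q y - M)) / 4)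
        ((2 * |Q x| + 2 * Q y - M - M) / 4)).subset ?_)
    rintro _ ⟨s, hs, rfl⟩
    obtain ⟨h₁, h₂⟩ := hQ s hs y rfl rfl
    obtain ⟨h₃, h₄⟩ := hQ s hs (-y) (norm_neg y) (apply_neg_of_parallelogram hpar y)
    simp only [f, AddMonoidHom.mk'_apply, polarForm, ← sub_eq_add_neg] at h₃ h₄ ⊢
    constructor <;> linarith
  simpa [f] using map_real_smul f hf c 1


section QuadraticFunctional

variable {F : Type*} [NormedAddCommGroup F] [InnerProductSpace ℝ F] [FiniteDimensional ℝ F]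

theorem exists_symm_eq_inner_of_parallelogram {Q : F → ℝ}
    (hpar : ∀ x y, Q (x + y) + Q (x - y) = 2 * Q x + 2 * Q y)
    (hsmul : ∀ (c : ℝ) x, Q (c • x) = c ^ 2 * Q x)
    (hbdd : ∀ R, BddBelow (Q '' closedBall 0 R)) :
    ∃ A : F →L[ℝ] F, (∀ x y, ⟪A x, y⟫ = ⟪x, A y⟫) ∧ ∀ x, Q x = 1 / 2 * ⟪x, A x⟫ := by
  have hcomm := polarForm_comm hpar
  have hadd := polarForm_add_left hpar
  have hsmul := polarForm_smul_left hpar hsmul hbdd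
  let B : F →ₗ[ℝ] F →ₗ[ℝ] ℝ := LinearMap.mk₂ ℝ (polarForm Q) hadd (by simpa using hsmul)
    (fun x y z => by rw [hcomm, hadd, hcomm y, hcomm z])
    (fun c x y => by rw [hcomm, hsmul, hcomm, smul_eq_mul])
  let A := (2 : ℝ) • InnerProductSpace.continuousLinearMapOfBilin (𝕜 := ℝ) B.toContinuousBilinearMap
  have hA : ∀ x y, ⟪A x, y⟫ = 2 * polarForm Q x y := fun x y => by
    simp only [A, smul_apply, real_inner_smul_left,
      InnerProductSpace.continuousLinearMapOfBilin_apply]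
    rfl
  refine ⟨A, fun x y => ?_, fun x => ?_⟩
  · rw [hA, real_inner_comm, hA, hcomm]
  · rw [real_inner_comm, hA, polarForm_self hpar]
    ring

theorem Submodule.exists_symm_eq_inner_of_parallelogram (S : Submodule ℝ F) {Q : F → ℝ}
    (hpar : ∀ x ∈ S, ∀ y ∈ S, Q (x + y) + Q (x - y) = 2 * Q x + 2 * Q y)
    (hsmul : ∀ (c : ℝ), ∀ x ∈ S, Q (c • x) = c ^ 2 * Q x)
    (hbdd : ∀ R, BddBelow (Q '' (S ∩ closedBall 0 R))) :
    ∃ A : F →L[ℝ] F, (∀ x y, ⟪A x, y⟫ = ⟪x, A y⟫) ∧ ∀ x ∈ S, Q x = 1 / 2 * ⟪x, A x⟫ := by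
  have hP := S.starProjection_apply_mem
  obtain ⟨A, hA, hQA⟩ := _root_.exists_symm_eq_inner_of_parallelogram (Q := Q ∘ S.starProjection)
    (fun x y => by simpa using hpar _ (hP x) _ (hP y))
    (fun c x => by simpa using hsmul c _ (hP x))
    (fun R => (hbdd R).mono <| by
      rintro _ ⟨x, hx, rfl⟩
      exact ⟨_, ⟨hP x, mem_closedBall_zero_iff.mpr
        ((S.norm_starProjection_apply_le x).trans (mem_closedBall_zero_iff.mp hx))⟩, rfl⟩)
  refine ⟨A, hA, fun x hx => ?_⟩
  simpa [S.starProjection_eq_self_iff.mpr hx] using hQA x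

end QuadraticFunctional

theorem Submodule.add_mem_and_sub_mem_iff {K V : Type*} [DivisionRing K] [CharZero K]
    [AddCommGroup V] [Module K V] (L : Submodule K V) {w z : V} :
    w + z ∈ L ∧ w - z ∈ L ↔ w ∈ L ∧ z ∈ L := by
  refine ⟨fun ⟨h₁, h₂⟩ => ?_, fun ⟨hw, hz⟩ => ⟨L.add_mem hw hz, L.sub_mem hw hz⟩⟩
  have hsum := L.add_mem h₁ h₂
  have hdiff := L.sub_mem h₁ h₂
  rw [add_add_sub_cancel, ← two_smul K] at hsum
  rw [add_sub_sub_cancel, ← two_smul K] at hdiff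
  exact ⟨(L.smul_mem_iff two_ne_zero).mp hsum, (L.smul_mem_iff two_ne_zero).mp hdiff⟩

namespace IsGenQuadForm

variable {q : EuclideanSpace ℝ (Fin n) → EReal}

theorem ne_bot (hq : IsGenQuadForm q) (w : EuclideanSpace ℝ (Fin n)) : q w ≠ ⊥ := by
  obtain ⟨A, L, -, hin, hout⟩ := hq
  by_cases hw : w ∈ L
  · exact hin w hw ▸ EReal.coe_ne_bot _
  · exact hout w hw ▸ top_ne_bot

theorem apply_zero (hq : IsGenQuadForm q) : q 0 = 0 := by
  obtain ⟨A, L, -, hin, -⟩ := hq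
  simp [hin 0 L.zero_mem]

theorem apply_smul (hq : IsGenQuadForm q) {c : ℝ} (hc : c ≠ 0) (w : EuclideanSpace ℝ (Fin n)) :
    q (c • w) = ((c ^ 2 : ℝ) : EReal) * q w := by
  obtain ⟨A, L, -, hin, hout⟩ := hq
  by_cases hw : w ∈ L
  · rw [hin _ hw, hin _ (L.smul_mem c hw), ← EReal.coe_mul, map_smul, real_inner_smul_left,
      real_inner_smul_right, EReal.coe_eq_coe_iff]
    ring
  · rw [hout _ hw, hout _ (mt (L.smul_mem_iff hc).mp hw),
      EReal.coe_mul_top_of_pos (by positivity)]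

theorem apply_add_add_apply_sub (hq : IsGenQuadForm q) (w z : EuclideanSpace ℝ (Fin n)) :
    q (w + z) + q (w - z) = 2 * q w + 2 * q z := by
  have hbot := hq.ne_bot
  obtain ⟨A, L, -, hin, hout⟩ := hq
  by_cases hwz : w ∈ L ∧ z ∈ L
  · obtain ⟨hw, hz⟩ := hwz
    rw [hin _ (L.add_mem hw hz), hin _ (L.sub_mem hw hz), hin w hw, hin z hz,
      show (2 : EReal) = ((2 : ℝ) : EReal) from rfl,
      ← EReal.coe_mul, ← EReal.coe_mul, ← EReal.coe_add, ← EReal.coe_add, EReal.coe_eq_coe_iff]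
    simp only [map_add, map_sub, inner_add_left, inner_add_right, inner_sub_left,
      inner_sub_right]
    ring
  · have hlhs : q (w + z) = ⊤ ∨ q (w - z) = ⊤ := by
      rw [← L.add_mem_and_sub_mem_iff, not_and_or] at hwz
      exact hwz.imp (hout _) (hout _)
    have hrhs : q w = ⊤ ∨ q z = ⊤ := by
      rw [not_and_or] at hwz
      exact hwz.imp (hout _) (hout _)
    rw [EReal.add_eq_top_of_ne_bot (hbot _) (hbot _) hlhs,
      EReal.add_eq_top_of_ne_bot (EReal.two_mul_ne_bot (hbot w)) (EReal.two_mul_ne_bot (hbot z))]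
    exact hrhs.imp (fun h => by rw [h, EReal.mul_top_of_pos two_pos])
      (fun h => by rw [h, EReal.mul_top_of_pos two_pos])

end IsGenQuadForm

theorem IsGenQuadForm.of_homogeneous_of_parallelogram_le {q : EuclideanSpace ℝ (Fin n) → EReal}
    (h0 : q 0 = 0) (hsmul : ∀ c : ℝ, c ≠ 0 → ∀ w, q (c • w) = ((c ^ 2 : ℝ) : EReal) * q w)
    (hpar : ∀ w z, q (w + z) + q (w - z) ≤ 2 * q w + 2 * q z)
    {r : ℝ} (hr : 0 ≤ r) (hlb : ∀ w, ((-r * ‖w‖ ^ 2 : ℝ) : EReal) ≤ q w) :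
    IsGenQuadForm q := by
  have hbot : ∀ w, q w ≠ ⊥ := fun w => ne_bot_of_le_ne_bot (EReal.coe_ne_bot _) (hlb w)
  have hadd : ∀ {w z}, q w ≠ ⊤ → q z ≠ ⊤ → q (w + z) ≠ ⊤ := fun {w z} hw hz =>
    ((EReal.add_ne_top_iff_ne_top₂ (hbot _) (hbot _)).mp <| ne_top_of_le_ne_top
      (EReal.add_ne_top (EReal.two_mul_ne_top hw) (EReal.two_mul_ne_top hz)) (hpar w z)).1
  let Q : EuclideanSpace ℝ (Fin n) → ℝ := fun w => (q w).toReal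
  have hcoe : ∀ {w}, q w ≠ ⊤ → q w = Q w := fun hw => (EReal.coe_toReal hw (hbot _)).symm
  let L : Submodule ℝ (EuclideanSpace ℝ (Fin n)) :=
    { carrier := {w | q w ≠ ⊤}
      add_mem' := hadd
      zero_mem' := by simp [h0]
      smul_mem' := fun c w hw => by
        rcases eq_or_ne c 0 with rfl | hc
        · simp [h0]
        · rw [Set.mem_ofPred_eq, hsmul c hc, hcoe hw, ← EReal.coe_mul]
          exact EReal.coe_ne_top _ }
  have hparQ : ∀ w ∈ L, ∀ z ∈ L, Q (w + z) + Q (w - z) = 2 * Q w + 2 * Q z := by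
    intro w hw z hz
    have hle := hpar w z
    have hge := hpar (w + z) (w - z)
    rw [add_add_sub_cancel, add_sub_sub_cancel, ← two_smul ℝ w, ← two_smul ℝ z,
      hsmul 2 two_ne_zero, hsmul 2 two_ne_zero] at hge
    rw [hcoe (L.add_mem hw hz), hcoe (L.sub_mem hw hz), hcoe hw, hcoe hz] at hle hge
    simp only [show (2 : EReal) = ((2 : ℝ) : EReal) from rfl, ← EReal.coe_mul, ← EReal.coe_add,
      EReal.coe_le_coe_iff] at hle hge
    linarith
  have hsmulQ : ∀ (c : ℝ), ∀ w ∈ L, Q (c • w) = c ^ 2 * Q w := by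
    intro c w hw
    rcases eq_or_ne c 0 with rfl | hc
    · simp [Q, h0]
    · rw [show Q (c • w) = (q (c • w)).toReal from rfl, hsmul c hc, hcoe hw, ← EReal.coe_mul,
        EReal.toReal_coe]
  have hbddQ : ∀ R, BddBelow (Q '' (L ∩ closedBall 0 R)) := fun R => by
    refine ⟨-r * R ^ 2, ?_⟩
    rintro _ ⟨w, ⟨hw, hwR⟩, rfl⟩
    have hlbw := hlb w
    rw [hcoe hw, EReal.coe_le_coe_iff] at hlbw
    have : ‖w‖ ^ 2 ≤ R ^ 2 := pow_le_pow_left₀ (norm_nonneg w) (mem_closedBall_zero_iff.mp hwR) 2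
    nlinarith
  obtain ⟨A, hA, hQA⟩ := L.exists_symm_eq_inner_of_parallelogram hparQ hsmulQ hbddQ
  exact ⟨A, L, hA, fun w hw => by rw [hcoe hw, hQA w hw], fun w hw => not_not.mp hw⟩

namespace EpiConverges

variable {q : ℕ → EuclideanSpace ℝ (Fin n) → EReal} {ql : EuclideanSpace ℝ (Fin n) → EReal}

theorem exists_tendsto (h : EpiConverges q ql) (x : EuclideanSpace ℝ (Fin n)) :
    ∃ xs : ℕ → EuclideanSpace ℝ (Fin n), Tendsto xs atTop (𝓝 x) ∧
      Tendsto (fun k => q k (xs k)) atTop (𝓝 (ql x)) := by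
  obtain ⟨xs, hxs, hsup⟩ := h.2 x
  have hinf := h.1 x xs hxs
  have hle : liminf (fun k => q k (xs k)) atTop ≤ limsup (fun k => q k (xs k)) atTop :=
    liminf_le_limsup
  exact ⟨xs, hxs, tendsto_of_liminf_eq_limsup (le_antisymm (hle.trans hsup) hinf)
    (le_antisymm hsup (hinf.trans hle))⟩

theorem le_of_eventually_le (h : EpiConverges q ql) {f : EuclideanSpace ℝ (Fin n) → EReal}
    (hf : Continuous f) (hfq : ∀ᶠ k in atTop, ∀ w, f w ≤ q k w) (x : EuclideanSpace ℝ (Fin n)) :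
    f x ≤ ql x := by
  obtain ⟨xs, hxs, hqx⟩ := h.exists_tendsto x
  exact le_of_tendsto_of_tendsto ((hf.tendsto x).comp hxs) hqx (hfq.mono fun k hk => hk (xs k))

theorem apply_zero_le (h : EpiConverges q ql) (h0 : ∀ k, q k 0 = 0) : ql 0 ≤ 0 := by
  simpa [h0] using h.1 0 (fun _ => 0) tendsto_const_nhds

theorem apply_smul_le (h : EpiConverges q ql) {c : ℝ}
    (hq : ∀ k w, q k (c • w) = ((c ^ 2 : ℝ) : EReal) * q k w) (x : EuclideanSpace ℝ (Fin n)) :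
    ql (c • x) ≤ ((c ^ 2 : ℝ) : EReal) * ql x := by
  obtain ⟨xs, hxs, hqx⟩ := h.exists_tendsto x
  calc ql (c • x) ≤ liminf (fun k => q k (c • xs k)) atTop := h.1 _ _ (hxs.const_smul c)
    _ = _ := by
      simp only [hq]
      exact (EReal.Tendsto.const_mul hqx (.inl (EReal.coe_ne_bot _))
        (.inl (EReal.coe_ne_top _))).liminf_eq

theorem apply_smul (h : EpiConverges q ql)
    (hq : ∀ k (c : ℝ), c ≠ 0 → ∀ w, q k (c • w) = ((c ^ 2 : ℝ) : EReal) * q k w)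
    {c : ℝ} (hc : c ≠ 0) (x : EuclideanSpace ℝ (Fin n)) :
    ql (c • x) = ((c ^ 2 : ℝ) : EReal) * ql x := by
  refine le_antisymm (h.apply_smul_le (fun k => hq k c hc) x) ?_
  have hinv := h.apply_smul_le (fun k => hq k c⁻¹ (inv_ne_zero hc)) (c • x)
  rw [inv_smul_smul₀ hc] at hinv
  calc ((c ^ 2 : ℝ) : EReal) * ql x
      ≤ ((c ^ 2 : ℝ) : EReal) * (((c⁻¹ ^ 2 : ℝ) : EReal) * ql (c • x)) :=
        mul_le_mul_of_nonneg_left hinv (EReal.coe_nonneg.mpr (sq_nonneg c))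
    _ = ql (c • x) := by
      rw [← mul_assoc, ← EReal.coe_mul, ← mul_pow, mul_inv_cancel₀ hc, one_pow, EReal.coe_one,
        one_mul]

theorem apply_add_add_apply_sub_le (h : EpiConverges q ql)
    (hq : ∀ k w z, q k (w + z) + q k (w - z) = 2 * q k w + 2 * q k z) (hbot : ∀ x, ql x ≠ ⊥)
    (w z : EuclideanSpace ℝ (Fin n)) : ql (w + z) + ql (w - z) ≤ 2 * ql w + 2 * ql z := by
  obtain ⟨ws, hws, hqw⟩ := h.exists_tendsto w
  obtain ⟨zs, hzs, hqz⟩ := h.exists_tendsto z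
  have htwo : ∀ {u : ℕ → EReal} {a : EReal}, Tendsto u atTop (𝓝 a) →
      Tendsto (fun k => 2 * u k) atTop (𝓝 (2 * a)) := fun hu =>
    EReal.Tendsto.const_mul hu (.inl (EReal.coe_ne_bot 2)) (.inl (EReal.coe_ne_top 2))
  have hlim : Tendsto (fun k => 2 * q k (ws k) + 2 * q k (zs k)) atTop
      (𝓝 (2 * ql w + 2 * ql z)) :=
    (EReal.continuousAt_add (.inr (EReal.two_mul_ne_bot (hbot z)))
      (.inl (EReal.two_mul_ne_bot (hbot w)))).tendsto.comp ((htwo hqw).prodMk_nhds (htwo hqz))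
  calc ql (w + z) + ql (w - z)
      ≤ liminf (fun k => q k (ws k + zs k)) atTop + liminf (fun k => q k (ws k - zs k)) atTop :=
        add_le_add (h.1 _ _ (hws.add hzs)) (h.1 _ _ (hws.sub hzs))
    _ ≤ liminf (fun k => q k (ws k + zs k) + q k (ws k - zs k)) atTop := EReal.le_liminf_add
    _ = 2 * ql w + 2 * ql z := by
      simp only [hq]
      exact hlim.liminf_eq

end EpiConverges

/-- If a sequence of generalized quadratic forms, uniformly bounded below by `−r‖·‖²` for
large `k`, epi-converges to `q`, then `q` is a generalized quadratic form and
`q(w) ≥ −r‖w‖²` for all `w`. -/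
theorem epiLimit_of_genQuadForms_isGenQuadForm
    (q : ℕ → EuclideanSpace ℝ (Fin n) → EReal) (ql : EuclideanSpace ℝ (Fin n) → EReal)
    (hq : ∀ k, IsGenQuadForm (q k)) (hconv : EpiConverges q ql)
    (r : ℝ) (hr : 0 ≤ r)
    (hbd : ∀ᶠ k in atTop, ∀ w, ((-r * ‖w‖ ^ 2 : ℝ) : EReal) ≤ q k w) :
    IsGenQuadForm ql ∧ ∀ w, ((-r * ‖w‖ ^ 2 : ℝ) : EReal) ≤ ql w := by
  have hlb : ∀ w, ((-r * ‖w‖ ^ 2 : ℝ) : EReal) ≤ ql w :=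
    hconv.le_of_eventually_le (continuous_coe_real_ereal.comp (by fun_prop)) hbd
  have hbot : ∀ w, ql w ≠ ⊥ := fun w => ne_bot_of_le_ne_bot (EReal.coe_ne_bot _) (hlb w)
  have h0 : ql 0 = 0 :=
    le_antisymm (hconv.apply_zero_le fun k => (hq k).apply_zero) (by simpa using hlb 0)
  refine ⟨.of_homogeneous_of_parallelogram_le h0 ?_ ?_ hr hlb, hlb⟩
  · exact fun c hc => hconv.apply_smul (fun k _ hc' => (hq k).apply_smul hc') hc
  · exact hconv.apply_add_add_apply_sub_le (fun k => (hq k).apply_add_add_apply_sub) hbot
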